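/- Let λ, μ : I → ℝ be positive differentiable functions on an interval I ⊆ ℝ, and let s ∈ ℝ. Define conditions (A): λμ is constant on I; (B): (λ²μ⁴)′ − s λ⁴μ² = 0 on I; (C): (μ²/λ²)′ − 2s = 0 on I. Then any two of the conditions (A), (B), (C) imply the third. -/

import Mathlib

open Set

/-!
Write `A = (λμ)'`, `B = (λ²μ⁴)' - sλ⁴μ²` and `C = (μ²/λ²)' - 2s`. Expanding the derivatives
gives the pointwise identity `B = 3λμ³ · A + (λ⁴μ²/2) · C`, whose coefficients are nonzero because
`λ, μ > 0`. Hence any two of `A, B, C` vanish identically iff the third does, and on an interval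
`A ≡ 0` is the same as `λμ` being constant.
-/

section Constancy

variable {𝕜 G : Type*} [RCLike 𝕜] [NormedAddCommGroup G] [NormedSpace 𝕜 G]
  {f : 𝕜 → G} {f' : 𝕜 → G} {s : Set 𝕜}

theorem forall_hasDerivAt_iff_eq {g : 𝕜 → G} (hf : ∀ x ∈ s, HasDerivAt f (f' x) x) :
    (∀ x ∈ s, HasDerivAt f (g x) x) ↔ ∀ x ∈ s, f' x = g x :=
  ⟨fun hg x hx => (hf x hx).unique (hg x hx),
    fun h x hx => h x hx ▸ hf x hx⟩

theorem IsOpen.exists_eq_const_iff_hasDerivAt_eq_zero (hs : IsOpen s) (hs' : IsPreconnected s)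
    (hf : ∀ x ∈ s, HasDerivAt f (f' x) x) :
    (∃ c, ∀ x ∈ s, f x = c) ↔ ∀ x ∈ s, f' x = 0 := by
  constructor
  · rintro ⟨c, hc⟩ x hx
    have hconst : f =ᶠ[nhds x] fun _ => c := Filter.eventually_of_mem (hs.mem_nhds hx) hc
    exact (hf x hx).unique ((hasDerivAt_const x c).congr_of_eventuallyEq hconst)
  · intro h
    exact hs.exists_is_const_of_deriv_eq_zero hs'
      (fun x hx => (hf x hx).differentiableAt.differentiableWithinAt)
      fun x hx => (hf x hx).deriv.trans (h x hx)

end Constancy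

section Derivatives

variable {l m : ℝ → ℝ} {l' m' r : ℝ}

theorem HasDerivAt.sq_mul_pow_four (hl : HasDerivAt l l' r) (hm : HasDerivAt m m' r) :
    HasDerivAt (fun x => l x ^ 2 * m x ^ 4)
      (2 * l r * l' * m r ^ 4 + 4 * l r ^ 2 * m r ^ 3 * m') r :=
  ((hl.fun_pow 2).fun_mul (hm.fun_pow 4)).congr_deriv (by norm_num; ring)

theorem HasDerivAt.sq_div_sq (hl : HasDerivAt l l' r) (hm : HasDerivAt m m' r) (hl0 : l r ≠ 0) :
    HasDerivAt (fun x => m x ^ 2 / l x ^ 2) (2 * m r * (l r * m' - m r * l') / l r ^ 3) r :=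
  ((hm.fun_pow 2).fun_div (hl.fun_pow 2) (pow_ne_zero 2 hl0)).congr_deriv
    (by field_simp; ring)

end Derivatives

theorem two_of_three_pointwise {s l m l' m' : ℝ} (hl : l ≠ 0) (hm : m ≠ 0) :
    (l' * m + l * m' = 0 → 2 * l * l' * m ^ 4 + 4 * l ^ 2 * m ^ 3 * m' = s * l ^ 4 * m ^ 2 →
        2 * m * (l * m' - m * l') / l ^ 3 = 2 * s) ∧
    (l' * m + l * m' = 0 → 2 * m * (l * m' - m * l') / l ^ 3 = 2 * s →
        2 * l * l' * m ^ 4 + 4 * l ^ 2 * m ^ 3 * m' = s * l ^ 4 * m ^ 2) ∧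
    (2 * l * l' * m ^ 4 + 4 * l ^ 2 * m ^ 3 * m' = s * l ^ 4 * m ^ 2 →
        2 * m * (l * m' - m * l') / l ^ 3 = 2 * s → l' * m + l * m' = 0) := by
  set A := l' * m + l * m'
  set C := 2 * m * (l * m' - m * l') / l ^ 3
  have key : 2 * l * l' * m ^ 4 + 4 * l ^ 2 * m ^ 3 * m' - s * l ^ 4 * m ^ 2 =
      3 * l * m ^ 3 * A + l ^ 4 * m ^ 2 / 2 * (C - 2 * s) := by
    simp only [A, C]; field_simp; ring
  have hA : 3 * l * m ^ 3 ≠ 0 := by positivity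
  have hC : l ^ 4 * m ^ 2 / 2 ≠ 0 := by positivity
  refine ⟨fun h₁ h₂ => ?_, fun h₁ h₂ => ?_, fun h₁ h₂ => ?_⟩
  · rw [h₁, h₂, sub_self, mul_zero, zero_add, eq_comm, mul_eq_zero] at key
    exact sub_eq_zero.1 (key.resolve_left hC)
  · rw [h₁, h₂, sub_self, mul_zero, mul_zero, add_zero] at key
    exact sub_eq_zero.1 key
  · rw [h₁, h₂, sub_self, sub_self, mul_zero, add_zero, eq_comm, mul_eq_zero] at key
    exact key.resolve_left hA

/-- Lemma 2.2: for positive differentiable λ, μ on an interval,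
    any two of the conditions (λμ constant), ((λ²μ⁴)′ = sλ⁴μ²), ((μ²/λ²)′ = 2s)
    imply the third. -/
theorem two_of_three_conditions (a b s : ℝ) (l m l' m' : ℝ → ℝ)
    (hl : ∀ r ∈ Ioo a b, 0 < l r) (hm : ∀ r ∈ Ioo a b, 0 < m r)
    (hld : ∀ r ∈ Ioo a b, HasDerivAt l (l' r) r)
    (hmd : ∀ r ∈ Ioo a b, HasDerivAt m (m' r) r) :
    ((∃ c, ∀ r ∈ Ioo a b, l r * m r = c) →
      (∀ r ∈ Ioo a b, HasDerivAt (fun x => l x ^ 2 * m x ^ 4) (s * l r ^ 4 * m r ^ 2) r) →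
      (∀ r ∈ Ioo a b, HasDerivAt (fun x => m x ^ 2 / l x ^ 2) (2 * s) r)) ∧
    ((∃ c, ∀ r ∈ Ioo a b, l r * m r = c) →
      (∀ r ∈ Ioo a b, HasDerivAt (fun x => m x ^ 2 / l x ^ 2) (2 * s) r) →
      (∀ r ∈ Ioo a b, HasDerivAt (fun x => l x ^ 2 * m x ^ 4) (s * l r ^ 4 * m r ^ 2) r)) ∧
    ((∀ r ∈ Ioo a b, HasDerivAt (fun x => l x ^ 2 * m x ^ 4) (s * l r ^ 4 * m r ^ 2) r) →
      (∀ r ∈ Ioo a b, HasDerivAt (fun x => m x ^ 2 / l x ^ 2) (2 * s) r) →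
      (∃ c, ∀ r ∈ Ioo a b, l r * m r = c)) := by
  rw [isOpen_Ioo.exists_eq_const_iff_hasDerivAt_eq_zero isPreconnected_Ioo
      fun r hr => (hld r hr).fun_mul (hmd r hr),
    forall_hasDerivAt_iff_eq fun r hr => (hld r hr).sq_mul_pow_four (hmd r hr),
    forall_hasDerivAt_iff_eq fun r hr => (hld r hr).sq_div_sq (hmd r hr) (hl r hr).ne']
  have key := fun r (hr : r ∈ Ioo a b) =>
    two_of_three_pointwise (s := s) (l' := l' r) (m' := m' r) (hl r hr).ne' (hm r hr).ne'
  exact ⟨fun hA hB r hr => (key r hr).1 (hA r hr) (hB r hr),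
    fun hA hC r hr => (key r hr).2.1 (hA r hr) (hC r hr),
    fun hB hC r hr => (key r hr).2.2 (hB r hr) (hC r hr)⟩
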